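/- Crucial part for SP-statements: if every completeness statement in C is an SP-statement (a single triple pattern (s, p, ?v) with s, p IRIs and ?v a variable), then for any BGP P and graph G, cruc(P, C, G) = { (s, p, o) ∈ P | there exists a statement Compl({(s, p, ?v)}) ∈ C }. -/
import Mathlib


/-- Constants (IRIs/literals) -/
abbrev Const := ℕ
/-- Variables -/
abbrev Var := ℕ

/-- A term is a constant or a variable. -/
inductive Term where
  | c : Const → Term
  | v : Var → Term
deriving DecidableEq

/-- Triple pattern -/
abbrev TP := Term × Term × Term
/-- Basic graph pattern (also used for graphs, as sets of ground triple patterns) -/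
abbrev BGP := Set TP
/-- (Partial) mapping from variables to constants -/
abbrev Mapping := Var → Option Const

def termVars : Term → Set Var
  | .c _ => ∅
  | .v x => {x}

def tpVars (t : TP) : Set Var := termVars t.1 ∪ termVars t.2.1 ∪ termVars t.2.2

def bgpVars (P : BGP) : Set Var := ⋃ t ∈ P, tpVars t

def termConsts : Term → Set Const
  | .c a => {a}
  | .v _ => ∅

def tpConsts (t : TP) : Set Const := termConsts t.1 ∪ termConsts t.2.1 ∪ termConsts t.2.2

def bgpConsts (P : BGP) : Set Const := ⋃ t ∈ P, tpConsts t

/-- A graph is a BGP all of whose triples are ground. -/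
def GroundBGP (P : BGP) : Prop := ∀ t ∈ P, tpVars t = ∅

def applyTerm (μ : Mapping) : Term → Term
  | .c a => .c a
  | .v x =>
    match μ x with
    | some a => .c a
    | none => .v x

def applyTP (μ : Mapping) (t : TP) : TP :=
  (applyTerm μ t.1, applyTerm μ t.2.1, applyTerm μ t.2.2)

def applyBGP (μ : Mapping) (P : BGP) : BGP := applyTP μ '' P

/-- Domain of a mapping -/
def mdom (μ : Mapping) : Set Var := {x | μ x ≠ none}

/-- Evaluation of a BGP over a graph: ⟦P⟧_G = {μ | dom(μ) = var(P), μP ⊆ G}. -/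
def bgpEval (P G : BGP) : Set Mapping := {μ | mdom μ = bgpVars P ∧ applyBGP μ P ⊆ G}

/-- A completeness statement Compl(P_C). -/
structure CS where
  pat : BGP

/-- The CONSTRUCT query associated to a completeness statement. -/
def constructQ (C : CS) (G : BGP) : BGP := ⋃ μ ∈ bgpEval C.pat G, applyBGP μ C.pat

/-- Transfer operator T_𝒞. -/
def transfer (𝒞 : Set CS) (G : BGP) : BGP := ⋃ C ∈ 𝒞, constructQ C G

/-- (G, G') is a valid extension pair wrt 𝒞. -/
def Valid (𝒞 : Set CS) (G G' : BGP) : Prop :=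
  G ⊆ G' ∧ GroundBGP G' ∧ transfer 𝒞 G' ⊆ G

/-- 𝒞, G ⊨ Compl(P). -/
def Entails (𝒞 : Set CS) (G : BGP) (P : BGP) : Prop :=
  ∀ G', Valid 𝒞 G G' → bgpEval P G' = bgpEval P G

def emptyMap : Mapping := fun _ => none

/-- Union of two mappings (left-biased; used on mappings with disjoint domains). -/
def munion (μ ν : Mapping) : Mapping := fun x => (μ x).orElse (fun _ => ν x)

/-- Partially mapped BGP -/
abbrev PMBGP := BGP × Mapping

/-- Evaluation of a partially mapped BGP: ⟦(P, ν)⟧_G = {ν ∪ ρ | ρ ∈ ⟦P⟧_G}. -/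
def evalPM (pm : PMBGP) (G : BGP) : Set Mapping :=
  {σ | ∃ ρ ∈ bgpEval pm.1 G, σ = munion pm.2 ρ}

def evalPMSet (S : Set PMBGP) (G : BGP) : Set Mapping := ⋃ pm ∈ S, evalPM pm G

/-- S ≡_{𝒞,G} S' : equal evaluations over every valid extension pair. -/
def EquivCG (𝒞 : Set CS) (G : BGP) (S S' : Set PMBGP) : Prop :=
  ∀ G', Valid 𝒞 G G' → evalPMSet S G' = evalPMSet S' G'

/-- The freeze mapping, sending each variable to a (fresh) constant. -/
def freezeMap (frz : Var → Const) : Mapping := fun x => some (frz x)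

/-- frz is a genuine freeze mapping: injective and its values are fresh. -/
def Fresh (frz : Var → Const) (𝒞 : Set CS) (G P : BGP) : Prop :=
  Function.Injective frz ∧
    ∀ x, frz x ∉ bgpConsts G ∪ bgpConsts P ∪ ⋃ C ∈ 𝒞, bgpConsts C.pat

/-- Crucial part: cruc(P, 𝒞, G) = P ∩ id̃⁻¹(T_𝒞(P̃ ∪ G)). -/
def cruc (P : BGP) (𝒞 : Set CS) (G : BGP) (frz : Var → Const) : BGP :=
  {t | t ∈ P ∧ applyTP (freezeMap frz) t ∈ transfer 𝒞 (applyBGP (freezeMap frz) P ∪ G)}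

/-- Equivalent partial grounding operator. -/
def epg (pm : PMBGP) (𝒞 : Set CS) (G : BGP) (frz : Var → Const) : Set PMBGP :=
  {q | ∃ μ ∈ bgpEval (cruc pm.1 𝒞 G frz) G, q = (applyBGP μ pm.1, munion pm.2 μ)}

/-- A partially mapped BGP is saturated wrt 𝒞 and G. -/
def Saturated (pm : PMBGP) (𝒞 : Set CS) (G : BGP) (frz : Var → Const) : Prop :=
  epg pm 𝒞 G frz = {pm}

/-- Partially mapped BGPs reachable from (P, ∅) by the saturation algorithm's epg steps. -/
inductive Reach (𝒞 : Set CS) (G : BGP) (frz : Var → Const) (P : BGP) : PMBGP → Prop where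
  | init : Reach 𝒞 G frz P (P, emptyMap)
  | step {pm pm' : PMBGP} : Reach 𝒞 G frz P pm → epg pm 𝒞 G frz ≠ {pm} →
      pm' ∈ epg pm 𝒞 G frz → Reach 𝒞 G frz P pm'

/-- The set Ω of mappings returned by the saturation algorithm sat(P, 𝒞, G). -/
def satSet (𝒞 : Set CS) (G : BGP) (frz : Var → Const) (P : BGP) : Set Mapping :=
  {ν | ∃ P', Reach 𝒞 G frz P (P', ν) ∧ Saturated (P', ν) 𝒞 G frz}

/-- An SP-statement: a single triple pattern (s, p, ?v) with s, p IRIs and ?v a variable. -/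
def isSP (C : CS) : Prop := ∃ s p x, C.pat = {(Term.c s, Term.c p, Term.v x)}

/-- For SP-statements, the crucial part consists exactly of the triple
patterns of P whose subject and predicate match some SP-statement in 𝒞. -/
theorem stmt12 (𝒞 : Set CS) (G : BGP) (frz : Var → Const) (P : BGP)
    (hg : GroundBGP G) (hfresh : Fresh frz 𝒞 G P) (hsp : ∀ C ∈ 𝒞, isSP C) :
    cruc P 𝒞 G frz =
      {t | t ∈ P ∧ ∃ s p x, (∃ o, t = (Term.c s, Term.c p, o)) ∧
        (⟨{(Term.c s, Term.c p, Term.v x)}⟩ : CS) ∈ 𝒞} := by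

  ext t
  simp only [cruc, Set.mem_setOf_eq]
  constructor
  · rintro ⟨htP, hT⟩
    refine ⟨htP, ?_⟩
    rw [transfer] at hT
    simp only [Set.mem_iUnion] at hT
    obtain ⟨C, hC, hconstr⟩ := hT
    obtain ⟨s, p, x, hpat⟩ := hsp C hC
    rw [constructQ] at hconstr
    simp only [Set.mem_iUnion] at hconstr
    obtain ⟨μ, _, hmem⟩ := hconstr
    rw [hpat] at hmem
    simp only [applyBGP, Set.image_singleton, Set.mem_singleton_iff] at hmem
    simp only [applyTP, applyBGP, Set.mem_image] at hmem
    -- freeze(t) = (c s, c p, applyTerm μ (v x))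
    have h1 : applyTerm (freezeMap frz) t.1 = Term.c s := congrArg Prod.fst hmem
    have h2 : applyTerm (freezeMap frz) t.2.1 = Term.c p := congrArg (Prod.fst ∘ Prod.snd) hmem
    have hsC : s ∈ bgpConsts C.pat := by
      rw [hpat]; simp [bgpConsts, tpConsts, termConsts]
    have hpC : p ∈ bgpConsts C.pat := by
      rw [hpat]; simp [bgpConsts, tpConsts, termConsts]
    have hfr : ∀ y, frz y ∉ bgpConsts C.pat := by
      intro y hy
      exact hfresh.2 y (by
        simp only [Set.mem_union, Set.mem_iUnion]
        exact Or.inr ⟨C, hC, hy⟩)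
    have ht1 : t.1 = Term.c s := by
      cases ht : t.1 with
      | c a => rw [ht] at h1; simpa [applyTerm] using h1
      | v y =>
        rw [ht] at h1
        simp only [applyTerm, freezeMap, Term.c.injEq] at h1
        exact absurd (h1 ▸ hfr y) (by simp [hsC])
    have ht2 : t.2.1 = Term.c p := by
      cases ht : t.2.1 with
      | c a => rw [ht] at h2; simpa [applyTerm] using h2
      | v y =>
        rw [ht] at h2
        simp only [applyTerm, freezeMap, Term.c.injEq] at h2
        exact absurd (h2 ▸ hfr y) (by simp [hpC])
    refine ⟨s, p, x, ⟨t.2.2, ?_⟩, ?_⟩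
    · rw [← ht1, ← ht2]
    · have : (⟨{(Term.c s, Term.c p, Term.v x)}⟩ : CS) = C := by
        cases C; simp [← hpat]
      rw [this]; exact hC
  · rintro ⟨htP, s, p, x, ⟨o, rfl⟩, hC⟩
    refine ⟨htP, ?_⟩
    set a : Const := match o with | .c b => b | .v y => frz y with ha
    have hao : applyTerm (freezeMap frz) o = Term.c a := by
      cases o <;> simp [applyTerm, freezeMap, ha]
    set μ : Mapping := fun y => if y = x then some a else none with hμ
    rw [transfer]
    simp only [Set.mem_iUnion]
    refine ⟨_, hC, ?_⟩
    rw [constructQ]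
    simp only [Set.mem_iUnion]
    have hfrz : applyTP (freezeMap frz) (Term.c s, Term.c p, o) = (Term.c s, Term.c p, Term.c a) := by
      simp only [applyTP, hao]
      rfl
    refine ⟨μ, ⟨?_, ?_⟩, ?_⟩
    · ext y
      by_cases h : y = x <;> simp [mdom, hμ, bgpVars, tpVars, termVars, h]
    · intro u hu
      simp only [applyBGP, Set.image_singleton, Set.mem_singleton_iff] at hu
      subst hu
      left
      refine ⟨(Term.c s, Term.c p, o), htP, ?_⟩
      rw [hfrz]
      simp [applyTP, applyTerm, hμ]
    · rw [hfrz]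
      simp [applyBGP, applyTP, applyTerm, hμ]
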